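/- Let J^{(1)}, ..., J^{(L)} be square matrices such that ‖J^{(ℓ)}‖_2 ≥ M > 0 for all ℓ, and the alignment between adjacent matrices satisfies Align(J^{(ℓ+1)}, J^{(ℓ)}) ≥ a > 0 for all ℓ (where Align(A,B) = |v_{A,1}ᵀ u_{B,1}| with v_{A,1} a top right singular vector of A and u_{B,1} a top left singular vector of B). Then ‖J^{(L)} J^{(L-1)} ⋯ J^{(1)}‖_2 ≥ (aM)^L / a. -/

import Mathlib

noncomputable def frobNorm {m n : Type*} [Fintype m] [Fintype n] (W : Matrix m n ℝ) : ℝ :=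
  Real.sqrt (∑ i, ∑ j, (W i j)^2)

noncomputable def opNorm {m n : Type*} [Fintype m] [Fintype n] [DecidableEq n] (W : Matrix m n ℝ) : ℝ :=
  ‖(Matrix.toEuclideanLin W).toContinuousLinearMap‖

noncomputable def srank {m n : Type*} [Fintype m] [Fintype n] [DecidableEq n] (W : Matrix m n ℝ) : ℝ :=
  (frobNorm W)^2 / (opNorm W)^2

noncomputable def vnorm {n : Type*} [Fintype n] (x : n → ℝ) : ℝ := Real.sqrt (∑ i, x i ^2)

/-- Product of the first k matrices: chainProd J k = J (k-1) * ⋯ * J 0. -/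
noncomputable def chainProd {n : ℕ} (J : ℕ → Matrix (Fin n) (Fin n) ℝ) : ℕ → Matrix (Fin n) (Fin n) ℝ
  | 0 => 1
  | (k+1) => J k * chainProd J k

/-- Alignment of A and B is at least a: there is a top right singular vector of A and a
top left singular vector of B whose absolute inner product is at least a. -/
def AlignGE {n : ℕ} (A B : Matrix (Fin n) (Fin n) ℝ) (a : ℝ) : Prop :=
  ∃ vA uB vB : Fin n → ℝ,
    vnorm vA = 1 ∧ vnorm uB = 1 ∧ vnorm vB = 1 ∧
    vnorm (A.mulVec vA) = opNorm A ∧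
    B.mulVec vB = opNorm B • uB ∧
    a ≤ |∑ i, vA i * uB i|

/-! If a unit vector `v` attains the operator norm of `A`, then `v` is an eigenvector of `AᵀA`
with eigenvalue `‖A‖²`, so `⟪Av, Ax⟫ = ‖A‖² ⟪v, x⟫` and Cauchy–Schwarz gives
`‖Ax‖ ≥ ‖A‖ |⟪v, x⟫|`. Taking `x = u_B` with `B v_B = ‖B‖ u_B` yields
`‖AB‖ ≥ ‖AB v_B‖ = ‖B‖ ‖A u_B‖ ≥ ‖A‖ ‖B‖ Align(A, B)`. Along the chain every factor after the
first therefore contributes at least `aM` and the first one `M`, so the product has norm at least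
`a^(L-1) M^L = (aM)^L / a`. -/

open scoped InnerProduct RealInnerProductSpace

namespace ContinuousLinearMap

variable {E F : Type*} [NormedAddCommGroup E] [InnerProductSpace ℝ E] [CompleteSpace E]
  [NormedAddCommGroup F] [InnerProductSpace ℝ F] [CompleteSpace F]

theorem adjoint_comp_self_apply_of_norm_apply_eq (f : E →L[ℝ] F) {v : E} (hv : ‖v‖ = 1)
    (hfv : ‖f v‖ = ‖f‖) : (f† ∘L f) v = ‖f‖ ^ 2 • v := by
  set g := f† ∘L f
  have hinner : ⟪v, g v⟫ = ‖f‖ ^ 2 := by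
    rw [comp_apply, adjoint_inner_right, real_inner_self_eq_norm_sq, hfv]
  have hle : ‖g v‖ ≤ ‖f‖ ^ 2 := by
    simpa [g, hv, norm_adjoint_comp_self, sq] using g.le_opNorm v
  have hge : ‖f‖ ^ 2 ≤ ‖g v‖ := by
    simpa [hinner, hv] using real_inner_le_norm v (g v)
  -- equality in Cauchy–Schwarz forces `g v ∥ v`
  have hcs : ⟪v, g v⟫ = ‖v‖ * ‖g v‖ := by rw [hv, one_mul, hinner]; linarith
  have hpar := inner_eq_norm_mul_iff_real.mp hcs
  rw [hv, one_smul, le_antisymm hle hge] at hpar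
  exact hpar.symm

theorem norm_mul_abs_inner_le_norm_apply (f : E →L[ℝ] F) {v : E} (hv : ‖v‖ = 1)
    (hfv : ‖f v‖ = ‖f‖) (x : E) : ‖f‖ * |⟪v, x⟫| ≤ ‖f x‖ := by
  rcases (norm_nonneg f).eq_or_lt with hf | hf
  · simp [← hf]
  have hfvx : ⟪f v, f x⟫ = ‖f‖ ^ 2 * ⟪v, x⟫ := by
    rw [← adjoint_inner_left, ← comp_apply, adjoint_comp_self_apply_of_norm_apply_eq f hv hfv,
      real_inner_smul_left]
  refine le_of_mul_le_mul_left ?_ hf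
  calc ‖f‖ * (‖f‖ * |⟪v, x⟫|) = |⟪f v, f x⟫| := by
        rw [hfvx, abs_mul, abs_of_nonneg (sq_nonneg ‖f‖)]; ring
    _ ≤ ‖f v‖ * ‖f x‖ := abs_real_inner_le_norm _ _
    _ = ‖f‖ * ‖f x‖ := by rw [hfv]

end ContinuousLinearMap

section Matrix

open Matrix WithLp

variable {m n : Type*} [Fintype m] [Fintype n]

theorem vnorm_eq_norm_toLp (x : n → ℝ) : vnorm x = ‖toLp 2 x‖ := by
  simp [vnorm, EuclideanSpace.norm_eq, sq_abs]

theorem vnorm_smul (c : ℝ) (x : n → ℝ) : vnorm (c • x) = |c| * vnorm x := by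
  rw [vnorm_eq_norm_toLp, vnorm_eq_norm_toLp, toLp_smul, norm_smul, Real.norm_eq_abs]

theorem opNorm_nonneg [DecidableEq n] (W : Matrix m n ℝ) : 0 ≤ opNorm W := norm_nonneg _

theorem vnorm_mulVec_eq_norm_apply [DecidableEq n] (W : Matrix m n ℝ) (x : n → ℝ) :
    vnorm (W *ᵥ x) = ‖(toEuclideanLin W).toContinuousLinearMap (toLp 2 x)‖ :=
  vnorm_eq_norm_toLp _

theorem vnorm_mulVec_le [DecidableEq n] (W : Matrix m n ℝ) (x : n → ℝ) :
    vnorm (W *ᵥ x) ≤ opNorm W * vnorm x := by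
  rw [vnorm_mulVec_eq_norm_apply, vnorm_eq_norm_toLp]
  exact ContinuousLinearMap.le_opNorm _ _

theorem opNorm_mul_abs_dotProduct_le [DecidableEq n] {W : Matrix m n ℝ} {v : n → ℝ}
    (hv : vnorm v = 1) (hWv : vnorm (W *ᵥ v) = opNorm W) (x : n → ℝ) :
    opNorm W * |v ⬝ᵥ x| ≤ vnorm (W *ᵥ x) := by
  rw [vnorm_eq_norm_toLp] at hv
  rw [vnorm_mulVec_eq_norm_apply] at hWv ⊢
  simpa [opNorm, EuclideanSpace.inner_toLp_toLp, dotProduct_comm] using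
    ContinuousLinearMap.norm_mul_abs_inner_le_norm_apply _ hv hWv (toLp 2 x)

theorem opNorm_mul_opNorm_mul_abs_dotProduct_le {l : Type*} [Fintype l] [DecidableEq m]
    [DecidableEq n] {A : Matrix l m ℝ} {B : Matrix m n ℝ}
    {vA uB : m → ℝ} {vB : n → ℝ} (hvA : vnorm vA = 1) (hAvA : vnorm (A *ᵥ vA) = opNorm A)
    (hvB : vnorm vB = 1) (hBvB : B *ᵥ vB = opNorm B • uB) :
    opNorm A * opNorm B * |vA ⬝ᵥ uB| ≤ opNorm (A * B) :=
  calc opNorm A * opNorm B * |vA ⬝ᵥ uB| = opNorm B * (opNorm A * |vA ⬝ᵥ uB|) := by ring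
    _ ≤ opNorm B * vnorm (A *ᵥ uB) :=
        mul_le_mul_of_nonneg_left (opNorm_mul_abs_dotProduct_le hvA hAvA uB) (opNorm_nonneg B)
    _ = vnorm ((A * B) *ᵥ vB) := by
        rw [← mulVec_mulVec, hBvB, mulVec_smul, vnorm_smul, abs_of_nonneg (opNorm_nonneg B)]
    _ ≤ opNorm (A * B) := by simpa [hvB] using vnorm_mulVec_le (A * B) vB

end Matrix

theorem AlignGE.opNorm_mul_opNorm_mul_le {n : ℕ} {A B : Matrix (Fin n) (Fin n) ℝ} {a : ℝ}
    (h : AlignGE A B a) : opNorm A * opNorm B * a ≤ opNorm (A * B) := by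
  obtain ⟨vA, uB, vB, hvA, -, hvB, hAvA, hBvB, ha⟩ := h
  calc opNorm A * opNorm B * a ≤ opNorm A * opNorm B * |vA ⬝ᵥ uB| :=
        mul_le_mul_of_nonneg_left ha (mul_nonneg (opNorm_nonneg A) (opNorm_nonneg B))
    _ ≤ opNorm (A * B) := opNorm_mul_opNorm_mul_abs_dotProduct_le hvA hAvA hvB hBvB

theorem pow_mul_pow_le_opNorm_chainProd {n : ℕ} (J : ℕ → Matrix (Fin n) (Fin n) ℝ) {M a : ℝ}
    (hM : 0 ≤ M) (ha : 0 ≤ a) (k : ℕ) (hnorm : ∀ ℓ ≤ k, M ≤ opNorm (J ℓ))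
    (halign : ∀ ℓ < k, AlignGE (J (ℓ + 1)) (chainProd J (ℓ + 1)) a) :
    a ^ k * M ^ (k + 1) ≤ opNorm (chainProd J (k + 1)) := by
  induction k with
  | zero => simpa [chainProd] using hnorm 0 le_rfl
  | succ k ih =>
    have hprev := ih (fun ℓ hℓ => hnorm ℓ (by omega)) (fun ℓ hℓ => halign ℓ (by omega))
    have hJ := hnorm (k + 1) le_rfl
    calc a ^ (k + 1) * M ^ (k + 1 + 1) = M * (a ^ k * M ^ (k + 1)) * a := by ring
      _ ≤ opNorm (J (k + 1)) * opNorm (chainProd J (k + 1)) * a := by gcongr; exact hM.trans hJ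
      _ ≤ opNorm (chainProd J (k + 1 + 1)) := (halign k k.lt_succ_self).opNorm_mul_opNorm_mul_le

/-- Jacobian product norm lower bound: ‖J^{(L)} ⋯ J^{(1)}‖₂ ≥ (aM)^L / a. -/
theorem jacobian_product_lower_bound {n : ℕ} (L : ℕ) (hL : 0 < L)
    (J : ℕ → Matrix (Fin n) (Fin n) ℝ) (M a : ℝ) (hM : 0 < M) (ha : 0 < a)
    (hnorm : ∀ ℓ < L, M ≤ opNorm (J ℓ))
    (halign : ∀ ℓ, ℓ + 1 < L → AlignGE (J (ℓ + 1)) (chainProd J (ℓ + 1)) a) :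
    (a * M) ^ L / a ≤ opNorm (chainProd J L) := by
  obtain ⟨k, rfl⟩ : ∃ k, L = k + 1 := Nat.exists_eq_add_one.mpr hL
  have hpow : (a * M) ^ (k + 1) / a = a ^ k * M ^ (k + 1) := by
    field_simp
    ring
  rw [hpow]
  exact pow_mul_pow_le_opNorm_chainProd J hM.le ha.le k (fun ℓ hℓ => hnorm ℓ (by omega))
    fun ℓ hℓ => halign ℓ (by omega)
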